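/- Let H and H̃ be n×n complex Hermitian matrices, let a and b be unit vectors in ℂⁿ, let T > 0 and p > 0, and suppose that (1/T)·∫₀^T |⟨b, exp(−itH)·a⟩|² dt ≥ p and that the operator norm satisfies ‖H − H̃‖ ≤ p/(4T). Then (1/T)·∫₀^T |⟨b, exp(−itH̃)·a⟩|² dt ≥ p/2. -/

import Mathlib

/-!
Since `H` and `H̃` are Hermitian, `exp (-itH)` and `exp (-itH̃)` are unitary, so both amplitudes
`x t = ⟨b, exp (-itH) a⟩` and `y t = ⟨b, exp (-itH̃) a⟩` have modulus at most `1`. Duhamel's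
formula, i.e. the mean value inequality for `s ↦ exp (-i(t-s)H) exp (-isH̃)`, gives
`‖exp (-itH) - exp (-itH̃)‖ ≤ t ‖H - H̃‖`, hence `|x t|² - |y t|² ≤ 2 |x t - y t| ≤ 2 t ε`
with `ε = ‖H - H̃‖ ≤ p / (4T)`. Integrating over `[0, T]` loses at most `ε T² ≤ p T / 4`.
-/

open MeasureTheory Matrix

theorem CStarRing.norm_le_one_of_mem_unitary {E : Type*} [NormedRing E] [StarRing E]
    [CStarRing E] {U : E} (hU : U ∈ unitary E) : ‖U‖ ≤ 1 := by
  rcases subsingleton_or_nontrivial E with _ | _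
  · simp [Subsingleton.elim U 0]
  · exact (CStarRing.norm_of_mem_unitary hU).le

section Duhamel

variable {𝔸 : Type*} [NormedRing 𝔸] [NormedAlgebra ℝ 𝔸] [CompleteSpace 𝔸]

theorem hasDerivAt_exp_smul_mul_exp_smul (K K' : 𝔸) (t s : ℝ) :
    HasDerivAt (fun u : ℝ ↦ NormedSpace.exp ((t - u) • K) * NormedSpace.exp (u • K'))
      (NormedSpace.exp ((t - s) • K) * ((K' - K) * NormedSpace.exp (s • K'))) s := by
  have hK : HasDerivAt (fun u : ℝ ↦ NormedSpace.exp ((t - u) • K))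
      (-(NormedSpace.exp ((t - s) • K) * K)) s := by
    simpa [Function.comp_def] using
      (hasDerivAt_exp_smul_const K (t - s)).scomp s ((hasDerivAt_id s).const_sub t)
  refine (hK.mul (hasDerivAt_exp_smul_const' K' s)).congr_deriv ?_
  simp only [sub_mul, mul_sub, neg_mul, mul_assoc]
  abel

theorem norm_exp_smul_sub_exp_smul_le {K K' : 𝔸}
    (hK : ∀ s : ℝ, 0 ≤ s → ‖NormedSpace.exp (s • K)‖ ≤ 1)
    (hK' : ∀ s : ℝ, 0 ≤ s → ‖NormedSpace.exp (s • K')‖ ≤ 1) {t : ℝ} (ht : 0 ≤ t) :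
    ‖NormedSpace.exp (t • K) - NormedSpace.exp (t • K')‖ ≤ t * ‖K - K'‖ := by
  have hderiv_le : ∀ s ∈ Set.Ico 0 t,
      ‖NormedSpace.exp ((t - s) • K) * ((K' - K) * NormedSpace.exp (s • K'))‖ ≤ ‖K - K'‖ := by
    rintro s ⟨hs0, hst⟩
    calc _ ≤ ‖NormedSpace.exp ((t - s) • K)‖ * (‖K' - K‖ * ‖NormedSpace.exp (s • K')‖) :=
          (norm_mul_le _ _).trans (by gcongr; exact norm_mul_le _ _)
      _ ≤ 1 * (‖K' - K‖ * 1) := by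
          gcongr
          exacts [hK _ (sub_nonneg.2 hst.le), hK' s hs0]
      _ = ‖K - K'‖ := by rw [one_mul, mul_one, norm_sub_rev]
  have := norm_image_sub_le_of_norm_deriv_le_segment'
    (fun s _ ↦ (hasDerivAt_exp_smul_mul_exp_smul K K' t s).hasDerivWithinAt) hderiv_le t
    (Set.right_mem_Icc.2 ht)
  simpa [norm_sub_rev, mul_comm] using this

end Duhamel

section CStarAlgebra

variable {E : Type*} [NormedRing E] [StarRing E] [CStarRing E] [NormedAlgebra ℂ E]
  [StarModule ℂ E] [CompleteSpace E] {A A' : E}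

theorem IsSelfAdjoint.norm_exp_neg_mul_I_smul_le_one (hA : IsSelfAdjoint A) (t : ℝ) :
    ‖NormedSpace.exp ((-(t : ℂ) * Complex.I) • A)‖ ≤ 1 := by
  let : NormedAlgebra ℚ E := .restrictScalars ℚ ℂ E
  refine CStarRing.norm_le_one_of_mem_unitary (NormedSpace.exp_mem_unitary_of_mem_skewAdjoint ?_)
  refine hA.smul_mem_skewAdjoint ?_
  simp [skewAdjoint.mem_iff]

theorem IsSelfAdjoint.norm_exp_neg_mul_I_smul_sub_le (hA : IsSelfAdjoint A)
    (hA' : IsSelfAdjoint A') {t : ℝ} (ht : 0 ≤ t) :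
    ‖NormedSpace.exp ((-(t : ℂ) * Complex.I) • A) - NormedSpace.exp ((-(t : ℂ) * Complex.I) • A')‖
      ≤ t * ‖A - A'‖ := by
  have hsmul (s : ℝ) (B : E) : s • (-Complex.I • B) = (-(s : ℂ) * Complex.I) • B := by
    rw [← Complex.coe_smul, smul_smul, mul_neg, neg_mul]
  have h := norm_exp_smul_sub_exp_smul_le
    (fun s _ ↦ hsmul s A ▸ hA.norm_exp_neg_mul_I_smul_le_one s)
    (fun s _ ↦ hsmul s A' ▸ hA'.norm_exp_neg_mul_I_smul_le_one s) ht
  rwa [hsmul, hsmul, ← smul_sub, norm_smul, norm_neg, Complex.norm_I, one_mul] at h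

end CStarAlgebra

theorem EuclideanSpace.norm_toLp_eq_one {𝕜 n : Type*} [RCLike 𝕜] [Fintype n] {a : n → 𝕜}
    (ha : star a ⬝ᵥ a = 1) : ‖WithLp.toLp 2 a‖ = 1 := by
  have h : (‖WithLp.toLp 2 a‖ : 𝕜) ^ 2 = 1 := by
    rw [← inner_self_eq_norm_sq_to_K, EuclideanSpace.inner_toLp_toLp, dotProduct_comm, ha]
  exact (pow_eq_one_iff_of_nonneg (norm_nonneg _) two_ne_zero).1 (by exact_mod_cast h)

section L2Operator

open scoped Matrix.Norms.L2Operator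

variable {𝕜 m n : Type*} [RCLike 𝕜] [Fintype m] [Fintype n] [DecidableEq n]

theorem Matrix.norm_star_dotProduct_mulVec_le_l2_opNorm (M : Matrix m n 𝕜) (a : n → 𝕜)
    (b : m → 𝕜) : ‖star b ⬝ᵥ M *ᵥ a‖ ≤ ‖WithLp.toLp 2 b‖ * ‖M‖ * ‖WithLp.toLp 2 a‖ := by
  have : star b ⬝ᵥ M *ᵥ a = inner 𝕜 (WithLp.toLp 2 b) (WithLp.toLp 2 (M *ᵥ a)) := by
    rw [EuclideanSpace.inner_toLp_toLp, dotProduct_comm]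
  rw [this, mul_assoc]
  exact (norm_inner_le_norm _ _).trans (by gcongr; exact l2_opNorm_mulVec M (WithLp.toLp 2 a))

theorem Matrix.norm_star_dotProduct_mulVec_le_l2_opNorm_of_unit {a : n → 𝕜} {b : m → 𝕜}
    (ha : star a ⬝ᵥ a = 1) (hb : star b ⬝ᵥ b = 1) (M : Matrix m n 𝕜) :
    ‖star b ⬝ᵥ M *ᵥ a‖ ≤ ‖M‖ := by
  simpa [EuclideanSpace.norm_toLp_eq_one ha, EuclideanSpace.norm_toLp_eq_one hb] using
    M.norm_star_dotProduct_mulVec_le_l2_opNorm a b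

end L2Operator

noncomputable def transitionAmplitude {n : Type*} [Fintype n] [DecidableEq n]
    (H : Matrix n n ℂ) (a b : n → ℂ) (t : ℝ) : ℂ :=
  star b ⬝ᵥ NormedSpace.exp ((-(t : ℂ) * Complex.I) • H) *ᵥ a

section transitionAmplitude

open scoped Matrix.Norms.L2Operator

variable {n : Type*} [Fintype n] [DecidableEq n] {H H' : Matrix n n ℂ} {a b : n → ℂ}

theorem continuous_transitionAmplitude (H : Matrix n n ℂ) (a b : n → ℂ) :
    Continuous (transitionAmplitude H a b) := by
  let : NormedAlgebra ℚ (Matrix n n ℂ) := .restrictScalars ℚ ℂ _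
  unfold transitionAmplitude
  fun_prop

theorem norm_transitionAmplitude_le_one (hH : H.IsHermitian) (ha : star a ⬝ᵥ a = 1)
    (hb : star b ⬝ᵥ b = 1) (t : ℝ) : ‖transitionAmplitude H a b t‖ ≤ 1 :=
  (norm_star_dotProduct_mulVec_le_l2_opNorm_of_unit ha hb _).trans
    (hH.isSelfAdjoint.norm_exp_neg_mul_I_smul_le_one t)

theorem norm_transitionAmplitude_sub_le (hH : H.IsHermitian) (hH' : H'.IsHermitian)
    (ha : star a ⬝ᵥ a = 1) (hb : star b ⬝ᵥ b = 1) {t : ℝ} (ht : 0 ≤ t) :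
    ‖transitionAmplitude H a b t - transitionAmplitude H' a b t‖ ≤ t * ‖H - H'‖ := by
  rw [transitionAmplitude, transitionAmplitude, ← dotProduct_sub, ← sub_mulVec]
  exact (norm_star_dotProduct_mulVec_le_l2_opNorm_of_unit ha hb _).trans
    (hH.isSelfAdjoint.norm_exp_neg_mul_I_smul_sub_le hH'.isSelfAdjoint ht)

end transitionAmplitude

theorem sq_norm_sub_sq_norm_le {E : Type*} [SeminormedAddCommGroup E] {x y : E} (hx : ‖x‖ ≤ 1)
    (hy : ‖y‖ ≤ 1) : ‖x‖ ^ 2 - ‖y‖ ^ 2 ≤ 2 * ‖x - y‖ := by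
  have hsub : ‖x‖ - ‖y‖ ≤ ‖x - y‖ := norm_sub_norm_le x y
  nlinarith [mul_le_mul_of_nonneg_left hsub (add_nonneg (norm_nonneg x) (norm_nonneg y)),
    mul_le_mul_of_nonneg_left (add_le_add hx hy) (norm_nonneg (x - y))]

theorem integral_norm_sq_sub_le {E : Type*} [NormedAddCommGroup E] {x y : ℝ → E} {ε T : ℝ}
    (hT : 0 ≤ T) (hx : Continuous x) (hy : Continuous y) (hx1 : ∀ t, ‖x t‖ ≤ 1)
    (hy1 : ∀ t, ‖y t‖ ≤ 1) (hxy : ∀ t ∈ Set.Icc 0 T, ‖x t - y t‖ ≤ ε * t) :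
    (∫ t in 0..T, ‖x t‖ ^ 2) - ε * T ^ 2 ≤ ∫ t in 0..T, ‖y t‖ ^ 2 := by
  have hlin : ∫ t in 0..T, 2 * ε * t = ε * T ^ 2 := by
    rw [intervalIntegral.integral_const_mul, integral_id]; ring
  have hxi : IntervalIntegrable (fun t ↦ ‖x t‖ ^ 2) volume 0 T :=
    (hx.norm.pow 2).intervalIntegrable _ _
  have hyi : IntervalIntegrable (fun t ↦ ‖y t‖ ^ 2) volume 0 T :=
    (hy.norm.pow 2).intervalIntegrable _ _
  have hlini : IntervalIntegrable (fun t ↦ 2 * ε * t) volume 0 T :=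
    (continuous_const_mul _).intervalIntegrable _ _
  rw [← hlin, ← intervalIntegral.integral_sub hxi hlini]
  refine intervalIntegral.integral_mono_on hT (hxi.sub hlini) hyi fun t ht ↦ ?_
  linarith [sq_norm_sub_sq_norm_le (hx1 t) (hy1 t), hxy t ht]

theorem quantum_walk_stability_under_perturbation_general
    (n : ℕ) (H H' : Matrix (Fin n) (Fin n) ℂ)
    (hH : H.IsHermitian) (hH' : H'.IsHermitian)
    (a b : Fin n → ℂ)
    (ha : star a ⬝ᵥ a = 1) (hb : star b ⬝ᵥ b = 1)
    (T p : ℝ) (hT : 0 < T)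
    (hlow : (1 / T) * ∫ t in (0:ℝ)..T,
        ‖star b ⬝ᵥ (NormedSpace.exp ((-(t : ℂ) * Complex.I) • H)).mulVec a‖ ^ 2 ≥ p)
    (hclose : ‖Matrix.toEuclideanCLM (𝕜 := ℂ) (H - H')‖ ≤ p / (4 * T)) :
    (1 / T) * ∫ t in (0:ℝ)..T,
        ‖star b ⬝ᵥ (NormedSpace.exp ((-(t : ℂ) * Complex.I) • H')).mulVec a‖ ^ 2 ≥ p / 2 := by
  -- The L2 operator norm of a matrix is the norm of its `toEuclideanCLM` by definition.
  have hdiff : ∀ t ∈ Set.Icc 0 T,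
      ‖transitionAmplitude H a b t - transitionAmplitude H' a b t‖ ≤ p / (4 * T) * t :=
    fun t ht ↦ (norm_transitionAmplitude_sub_le hH hH' ha hb ht.1).trans
      (by rw [mul_comm]; exact mul_le_mul_of_nonneg_right hclose ht.1)
  have hint := integral_norm_sq_sub_le hT.le (continuous_transitionAmplitude H a b)
    (continuous_transitionAmplitude H' a b) (norm_transitionAmplitude_le_one hH ha hb)
    (norm_transitionAmplitude_le_one hH' ha hb) hdiff
  have hp : 0 ≤ p := by
    have := (norm_nonneg _).trans hclose
    rw [le_div_iff₀ (by positivity)] at this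
    linarith
  rw [ge_iff_le, one_div, inv_mul_eq_div, le_div_iff₀ hT] at hlow ⊢
  calc p / 2 * T ≤ p * T - p / (4 * T) * T ^ 2 := by
        field_simp
        nlinarith
    _ ≤ _ := (sub_le_sub_right hlow _).trans hint

/-- If the quantum walk generated by the Hermitian matrix `H` has
time-averaged success probability at least `p` up to time `T`, and `H̃` is a Hermitian matrix
with `‖H - H̃‖ ≤ p/(4T)` in the operator norm, then the walk generated by `H̃` has
time-averaged success probability at least `p/2`. -/
theorem quantum_walk_stability_under_perturbation
    (n : ℕ) (H H' : Matrix (Fin n) (Fin n) ℂ)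
    (hH : H.IsHermitian) (hH' : H'.IsHermitian)
    (a b : Fin n → ℂ)
    (ha : star a ⬝ᵥ a = 1) (hb : star b ⬝ᵥ b = 1)
    (T p : ℝ) (hT : 0 < T) (hp : 0 < p)
    (hlow : (1 / T) * ∫ t in (0:ℝ)..T,
        ‖star b ⬝ᵥ (NormedSpace.exp ((-(t : ℂ) * Complex.I) • H)).mulVec a‖ ^ 2 ≥ p)
    (hclose : ‖Matrix.toEuclideanCLM (𝕜 := ℂ) (H - H')‖ ≤ p / (4 * T)) :
    (1 / T) * ∫ t in (0:ℝ)..T,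
        ‖star b ⬝ᵥ (NormedSpace.exp ((-(t : ℂ) * Complex.I) • H')).mulVec a‖ ^ 2 ≥ p / 2 :=
  quantum_walk_stability_under_perturbation_general n H H' hH hH' a b ha hb T p hT hlow hclose
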